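/- Let ρ be a smooth positive scalar function and u a smooth divergence-free vector field on ℝ², both with sufficient decay. Then ∫_{ℝ²} div(ρ(∇u⊥ + ∇⊥u)) · u dx = 0, i.e., the odd viscosity tensor is orthogonal to u in L². -/

import Mathlib

open MeasureTheory Set

noncomputable section

/-- Points of the plane `ℝ²`. -/
abbrev V2 : Type := Fin 2 → ℝ

/-- Partial derivative `∂ᵢ f` of a scalar function on `ℝ²`. -/
noncomputable def pd (i : Fin 2) (f : V2 → ℝ) (x : V2) : ℝ :=
  fderiv ℝ f x (Pi.single i 1)

/-- Rotation by `π/2` of a vector field: `v⊥ = (−v₂, v₁)`. -/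
def perp (u : V2 → V2) : V2 → V2 := fun x => ![-(u x 1), u x 0]

/-- `∇⊥f = (−∂₂f, ∂₁f)`. -/
noncomputable def gradPerp (f : V2 → ℝ) (x : V2) : V2 := ![-(pd 1 f x), pd 0 f x]

/-- Transpose Jacobian: `(∇u)_{i,j} = ∂ᵢ uⱼ`. -/
noncomputable def nablaMat (u : V2 → V2) (x : V2) : Matrix (Fin 2) (Fin 2) ℝ :=
  Matrix.of fun i j => pd i (fun y => u y j) x

/-- `(∇⊥u)_{i,j} = (∇⊥uⱼ)ᵢ`. -/
noncomputable def nablaPerpMat (u : V2 → V2) (x : V2) : Matrix (Fin 2) (Fin 2) ℝ :=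
  Matrix.of fun i j => gradPerp (fun y => u y j) x i

/-- Vorticity `ω = ∂₁u₂ − ∂₂u₁`. -/
noncomputable def vort (u : V2 → V2) (x : V2) : ℝ :=
  pd 0 (fun y => u y 1) x - pd 1 (fun y => u y 0) x

lemma contDiff_pd (i : Fin 2) {f : V2 → ℝ} (hf : ContDiff ℝ (⊤ : ℕ∞) f) : ContDiff ℝ (⊤ : ℕ∞) (pd i f) := by
  unfold pd
  exact (ContinuousLinearMap.apply ℝ ℝ (Pi.single i 1)).contDiff.comp (hf.fderiv_right (m := ((⊤ : ℕ∞) : WithTop ℕ∞)) (by simp))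

lemma hcs_pd {F : V2 → ℝ} (hs : HasCompactSupport F) (i : Fin 2) :
    HasCompactSupport (pd i F) :=
  (hs.fderiv ℝ).comp_left (g := fun L : V2 →L[ℝ] ℝ => L (Pi.single i 1)) rfl

lemma integral_pd_eq_zero {F : V2 → ℝ} (hF : ContDiff ℝ (⊤ : ℕ∞) F) (hs : HasCompactSupport F)
    (i : Fin 2) : ∫ x : V2, pd i F x = 0 := by
  obtain ⟨C, hC⟩ := ContDiff.lipschitzWith_of_hasCompactSupport hs hF (by simp)
  have h := LipschitzWith.integral_lineDeriv_mul_eq (μ := volume)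
    (LipschitzWith.const' (K := 0) (1:ℝ)) hC hs (-(Pi.single i 1))
  have hc : ∀ (x : V2) (v : V2), lineDeriv ℝ (fun _ : V2 => (1:ℝ)) x v = 0 := by
    intro x v; simp [lineDeriv]
  simp only [hc, zero_mul, integral_zero, neg_neg, mul_one] at h
  rw [show (∫ x : V2, pd i F x) = ∫ x : V2, lineDeriv ℝ F x (Pi.single i 1) from
    integral_congr_ae (Filter.Eventually.of_forall fun x =>
      ((hF.differentiable (by simp) x).lineDeriv_eq_fderiv).symm), ← h]

lemma pd_add {f g : V2 → ℝ} {x : V2} (hf : DifferentiableAt ℝ f x)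
    (hg : DifferentiableAt ℝ g x) (i : Fin 2) :
    pd i (fun y => f y + g y) x = pd i f x + pd i g x := by
  simp [pd, fderiv_fun_add hf hg]

lemma pd_mul {f g : V2 → ℝ} {x : V2} (hf : DifferentiableAt ℝ f x)
    (hg : DifferentiableAt ℝ g x) (i : Fin 2) :
    pd i (fun y => f y * g y) x = pd i f x * g x + f x * pd i g x := by
  simp [pd, fderiv_fun_mul hf hg]; ring

/-- the odd viscosity tensor is L²-orthogonal to `u`. -/
theorem stmt1 (ρ : V2 → ℝ) (u : V2 → V2)
    (hρ : ContDiff ℝ (⊤ : ℕ∞) ρ) (hρpos : ∀ x, 0 < ρ x)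
    (hu : ContDiff ℝ (⊤ : ℕ∞) u) (husupp : HasCompactSupport u)
    (hdiv : ∀ x, ∑ j : Fin 2, pd j (fun y => u y j) x = 0) :
    (∫ x : V2, ∑ k : Fin 2,
        (∑ j : Fin 2,
          pd j (fun y => ρ y * (nablaMat (perp u) y + nablaPerpMat u y) j k) x)
          * u x k) = 0 := by
  set q : Fin 2 → Fin 2 → V2 → ℝ := fun i k x => pd i (fun y => u y k) x with hq
  have huk : ∀ k : Fin 2, ContDiff ℝ (⊤ : ℕ∞) (fun y => u y k) := fun k => contDiff_pi.1 hu k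
  have hqs : ∀ i k, ContDiff ℝ (⊤ : ℕ∞) (q i k) := fun i k => contDiff_pd i (huk k)
  set T : Fin 2 → Fin 2 → V2 → ℝ := fun j k y =>
    ρ y * (![![-(q 0 1 y) + -(q 1 0 y), q 0 0 y + -(q 1 1 y)],
             ![-(q 1 1 y) + q 0 0 y, q 1 0 y + q 0 1 y]] j k) with hTdef
  have hT : ∀ j k : Fin 2, (fun y => ρ y * (nablaMat (perp u) y + nablaPerpMat u y) j k)
      = T j k := by
    intro j k
    funext y
    fin_cases j <;> fin_cases k <;>
      simp [hTdef, hq, nablaMat, nablaPerpMat, gradPerp, perp, pd, fderiv_neg,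
        Matrix.add_apply]
  have hTs : ∀ j k, ContDiff ℝ (⊤ : ℕ∞) (T j k) := by
    intro j k
    fin_cases j <;> fin_cases k <;>
      simp only [hTdef, Matrix.cons_val_zero, Matrix.cons_val_one, Matrix.head_cons]
    · exact hρ.mul ((hqs 0 1).neg.add (hqs 1 0).neg)
    · exact hρ.mul ((hqs 0 0).add (hqs 1 1).neg)
    · exact hρ.mul ((hqs 1 1).neg.add (hqs 0 0))
    · exact hρ.mul ((hqs 1 0).add (hqs 0 1))
  have hukc : ∀ k : Fin 2, HasCompactSupport (fun y => u y k) :=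
    fun k => husupp.comp_left (g := fun v : V2 => v k) rfl
  set F : Fin 2 → V2 → ℝ := fun j y => T j 0 y * u y 0 + T j 1 y * u y 1 with hF
  have hFs : ∀ j, ContDiff ℝ (⊤ : ℕ∞) (F j) := fun j =>
    ((hTs j 0).mul (huk 0)).add ((hTs j 1).mul (huk 1))
  have hFsupp : ∀ j, HasCompactSupport (F j) := fun j =>
    ((hukc 0).mul_left).add ((hukc 1).mul_left)
  have key : ∀ x : V2, (∑ k : Fin 2,
        (∑ j : Fin 2,
          pd j (fun y => ρ y * (nablaMat (perp u) y + nablaPerpMat u y) j k) x)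
          * u x k) = pd 0 (F 0) x + pd 1 (F 1) x := by
    intro x
    have hd : ∀ (f : V2 → ℝ), ContDiff ℝ (⊤ : ℕ∞) f → DifferentiableAt ℝ f x :=
      fun f hf => hf.differentiable (by simp) x
    have eF : ∀ j : Fin 2, pd j (F j) x
        = (pd j (T j 0) x * u x 0 + T j 0 x * q j 0 x)
          + (pd j (T j 1) x * u x 1 + T j 1 x * q j 1 x) := by
      intro j
      rw [hF]
      rw [pd_add (hd _ ((hTs j 0).mul (huk 0))) (hd _ ((hTs j 1).mul (huk 1))),
        pd_mul (hd _ (hTs j 0)) (hd _ (huk 0)), pd_mul (hd _ (hTs j 1)) (hd _ (huk 1))]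
    simp only [Fin.sum_univ_two, hT, eF 0, eF 1, hTdef, Matrix.cons_val_zero,
      Matrix.cons_val_one, Matrix.head_cons]
    ring
  rw [integral_congr_ae (Filter.Eventually.of_forall key)]
  have hi : ∀ j i : Fin 2, Integrable (pd i (F j)) volume := fun j i =>
    ((contDiff_pd i (hFs j)).continuous).integrable_of_hasCompactSupport (hcs_pd (hFsupp j) i)
  rw [integral_add (hi 0 0) (hi 1 1), integral_pd_eq_zero (hFs 0) (hFsupp 0) 0,
    integral_pd_eq_zero (hFs 1) (hFsupp 1) 1, add_zero]
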